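/- Let p ≥ 7 be an odd prime. For all integers i ≥ 2 and k ≥ 0 with i + k ≤ p, the congruence 2(k + 2i − 1)p − 2(k + 1) ≡ 2p (mod 2p² − 2p − 2) holds if and only if k = 0 and 2i = p + 1. -/

import Mathlib

/-!
Cancelling the factor 2, the congruence says that `M = p² - p - 1` divides
`n = (k + 2i - 2)p - (k + 1)`. The constraints on `i` and `k` put `n` strictly between `0`
and `3M`, so `n = M` or `n = 2M`. In the first case `p ∣ k` with `0 ≤ k < p`, so `k = 0` and
`2i - 2 = p - 1`; in the second `p ∣ k - 1` with `|k - 1| < p`, so `k = 1` and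
`2i - 1 = 2p - 2`, impossible by parity.
-/

lemma Int.eq_or_eq_two_mul_of_dvd_of_lt_three_mul {M n : ℤ} (h : M ∣ n) (hn : 0 < n)
    (hn3 : n < 3 * M) : n = M ∨ n = 2 * M := by
  obtain ⟨c, rfl⟩ := h
  have hM : 0 < M := by linarith
  have hc0 : 0 < c := pos_of_mul_pos_right hn hM.le
  have hc3 : c < 3 := lt_of_mul_lt_mul_left (by linarith) hM.le
  interval_cases c
  · exact Or.inl (mul_one M)
  · exact Or.inr (mul_comm M 2)

lemma Int.eq_zero_of_mul_eq_of_abs_lt {P a b : ℤ} (h : P * a = b) (hb : |b| < P) :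
    a = 0 ∧ b = 0 := by
  have hb0 : b = 0 := Int.eq_zero_of_abs_lt_dvd ⟨a, h.symm⟩ hb
  have hP : P ≠ 0 := by linarith [abs_nonneg b]
  exact ⟨(mul_eq_zero.1 (h.trans hb0)).resolve_left hP, hb0⟩

lemma modEq_iff_dvd_sq_sub_sub_one (P i k : ℤ) :
    2 * (k + 2 * i - 1) * P - 2 * (k + 1) ≡ 2 * P [ZMOD 2 * P ^ 2 - 2 * P - 2] ↔
      P ^ 2 - P - 1 ∣ (k + 2 * i - 2) * P - (k + 1) := by
  have hdiff : 2 * P - (2 * (k + 2 * i - 1) * P - 2 * (k + 1)) =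
      2 * -((k + 2 * i - 2) * P - (k + 1)) := by ring
  have hmod : 2 * P ^ 2 - 2 * P - 2 = 2 * (P ^ 2 - P - 1) := by ring
  rw [Int.modEq_iff_dvd, hdiff, hmod, mul_dvd_mul_iff_left two_ne_zero, dvd_neg]

lemma sq_sub_sub_one_dvd_iff {P i k : ℤ} (hP : 3 ≤ P) (hi : 2 ≤ i) (hk : 0 ≤ k)
    (hik : i + k ≤ P) :
    P ^ 2 - P - 1 ∣ (k + 2 * i - 2) * P - (k + 1) ↔ k = 0 ∧ 2 * i = P + 1 := by
  constructor
  · intro h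
    have hpos : 0 < (k + 2 * i - 2) * P - (k + 1) := by
      nlinarith [mul_nonneg hk (by linarith : (0 : ℤ) ≤ P - 1),
        mul_nonneg (by linarith : (0 : ℤ) ≤ i - 2) (by linarith : (0 : ℤ) ≤ P)]
    have hlt : (k + 2 * i - 2) * P - (k + 1) < 3 * (P ^ 2 - P - 1) := by
      nlinarith [mul_le_mul_of_nonneg_right (by linarith : k + 2 * i - 2 ≤ 2 * P - 2)
        (by linarith : (0 : ℤ) ≤ P)]
    rcases Int.eq_or_eq_two_mul_of_dvd_of_lt_three_mul h hpos hlt with h1 | h2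
    · have hmul : P * (k + 2 * i - 1 - P) = k := by linear_combination h1
      obtain ⟨hq, hk0⟩ := Int.eq_zero_of_mul_eq_of_abs_lt hmul
        (abs_lt.2 ⟨by linarith, by linarith⟩)
      exact ⟨hk0, by linarith⟩
    · have hmul : P * (k + 2 * i - 2 * P) = k - 1 := by linear_combination h2
      obtain ⟨hq, hk1⟩ := Int.eq_zero_of_mul_eq_of_abs_lt hmul
        (abs_lt.2 ⟨by linarith, by linarith⟩)
      omega
  · rintro ⟨rfl, hi⟩
    exact ⟨1, by linear_combination P * hi⟩

theorem stmt_8_general (p : ℕ) (hp7 : 7 ≤ p) :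
    ∀ i k : ℤ, 2 ≤ i → 0 ≤ k → i + k ≤ (p : ℤ) →
      ((2 * (k + 2 * i - 1) * (p : ℤ) - 2 * (k + 1) ≡ 2 * (p : ℤ)
          [ZMOD 2 * (p : ℤ) ^ 2 - 2 * (p : ℤ) - 2]) ↔
        (k = 0 ∧ 2 * i = (p : ℤ) + 1)) := by
  intro i k hi hk hik
  rw [modEq_iff_dvd_sq_sub_sub_one]
  exact sq_sub_sub_one_dvd_iff (by omega) hi hk hik

/-- For p ≥ 7 odd prime: for i ≥ 2, k ≥ 0 with i + k ≤ p, the congruence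
2(k + 2i − 1)p − 2(k + 1) ≡ 2p (mod 2p² − 2p − 2) holds iff k = 0 and 2i = p + 1. -/
theorem stmt_8 (p : ℕ) (hp : Nat.Prime p) (hodd : Odd p) (hp7 : 7 ≤ p) :
    ∀ i k : ℤ, 2 ≤ i → 0 ≤ k → i + k ≤ (p : ℤ) →
      ((2 * (k + 2 * i - 1) * (p : ℤ) - 2 * (k + 1) ≡ 2 * (p : ℤ)
          [ZMOD 2 * (p : ℤ) ^ 2 - 2 * (p : ℤ) - 2]) ↔
        (k = 0 ∧ 2 * i = (p : ℤ) + 1)) :=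
  stmt_8_general p hp7
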